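/- arXiv:1903.08370 — 6 statements merged into one kernel-verified Lean document; each statement's English description precedes it below -/
import Mathlib

section
/- If A, B, C are positive integers with A!·B! = C! and C ≥ 2, then C ≥ A + B + 1 - log(A+1)/log 2 - log(B+1)/log 2. -/
/-!
Comparing 2-adic valuations via Legendre's formula `v₂(n!) = n - s₂(n)` turns `A! B! = C!` into
`A + B + s₂(C) = C + s₂(A) + s₂(B)`, where `s₂` is the binary digit sum. Since `s₂(C) ≥ 1` and a
number with `s` binary ones is at least `2 ^ s - 1`, i.e. `s₂(n) ≤ log₂ (n + 1)`, the bound follows.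
-/

open Nat

theorem Nat.digits_sum_pos (b : ℕ) {n : ℕ} (hn : n ≠ 0) : 0 < (b.digits n).sum :=
  (Nat.pos_of_ne_zero (getLast_digit_ne_zero b hn)).trans_le
    (List.le_sum_of_mem (List.getLast_mem _))

theorem Nat.two_pow_digits_sum_le_succ (n : ℕ) : 2 ^ (digits 2 n).sum ≤ n + 1 := by
  induction n using Nat.strong_induction_on with
  | _ n ih =>
    rcases n.eq_zero_or_pos with rfl | hn
    · simp
    rw [digits_def' one_lt_two hn, List.sum_cons, pow_add]
    calc 2 ^ (n % 2) * 2 ^ (digits 2 (n / 2)).sum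
        ≤ 2 ^ (n % 2) * (n / 2 + 1) := Nat.mul_le_mul_left _ (ih _ (div_lt_self hn one_lt_two))
      _ ≤ n + 1 := by rcases mod_two_eq_zero_or_one n with h | h <;> rw [h] <;> omega

theorem Nat.digits_sum_two_le_log_div_log_two (n : ℕ) :
    ((digits 2 n).sum : ℝ) ≤ Real.log (n + 1) / Real.log 2 := by
  rw [le_div_iff₀ (Real.log_pos one_lt_two), ← Real.pow_le_iff_le_log two_pos (by positivity)]
  exact_mod_cast two_pow_digits_sum_le_succ n

theorem Nat.add_add_digits_sum_eq_of_factorial_mul_factorial_eq (p : ℕ) [Fact p.Prime]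
    {A B C : ℕ} (h : A ! * B ! = C !) :
    A + B + (p.digits C).sum = C + (p.digits A).sum + (p.digits B).sum := by
  have hv : padicValNat p A ! + padicValNat p B ! = padicValNat p C ! := by
    rw [← padicValNat.mul (factorial_ne_zero A) (factorial_ne_zero B), h]
  have legendre := congrArg ((p - 1) * ·) hv
  simp only [mul_add, sub_one_mul_padicValNat_factorial] at legendre
  have := digit_sum_le p A
  have := digit_sum_le p B
  have := digit_sum_le p C
  omega

theorem lower_bound_C_general (A B C : ℕ) (hC : 2 ≤ C)
    (h : Nat.factorial A * Nat.factorial B = Nat.factorial C) :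
    (C : ℝ) ≥ (A : ℝ) + B + 1 - Real.log (A + 1) / Real.log 2
      - Real.log (B + 1) / Real.log 2 := by
  have : Fact (Nat.Prime 2) := ⟨prime_two⟩
  have hsum := add_add_digits_sum_eq_of_factorial_mul_factorial_eq 2 h
  have hsC := digits_sum_pos 2 (show C ≠ 0 by omega)
  have hle : A + B + 1 ≤ C + (digits 2 A).sum + (digits 2 B).sum := by omega
  have hsA := digits_sum_two_le_log_div_log_two A
  have hsB := digits_sum_two_le_log_div_log_two B
  have : (A : ℝ) + B + 1 ≤ C + (digits 2 A).sum + (digits 2 B).sum := by exact_mod_cast hle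
  linarith

theorem lower_bound_C (A B C : ℕ) (hA : 0 < A) (hB : 0 < B) (hC : 2 ≤ C)
    (h : Nat.factorial A * Nat.factorial B = Nat.factorial C) :
    (C : ℝ) ≥ (A : ℝ) + B + 1 - Real.log (A + 1) / Real.log 2
      - Real.log (B + 1) / Real.log 2 :=
  lower_bound_C_general A B C hC h
end

section
/- For all real x ≥ 1, 0 ≤ log Γ(x) - x(log x - 1) - (1/2)·log(2π/x) ≤ 1/(12x). -/
/-!
Binet's function `μ y = log Γ y - (y - 1/2) log y + y - log (2π) / 2` satisfies
`μ y - μ (y + 1) = (y + 1/2) log (1 + 1/y) - 1`, and the series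
`log (1 + 1/y) = 2 ∑ u^(2k+1) / (2k+1)` with `u = 1 / (2y + 1)` traps this between `0` and
`1 / (12 y) - 1 / (12 (y + 1))`. Hence `μ (x + n)` decreases and `μ (x + n) - 1 / (12 (x + n))`
increases with `n`. Both tend to `0`: at integers this is Stirling's formula for `n!`, and the
Euler limit `Γ (x + n) / (Γ n n^x) → 1` transfers it to `x + n`. So `0 ≤ μ x ≤ 1 / (12 x)`.
-/

open Real Filter Topology

lemma hasSum_mul_log_one_add_inv {y : ℝ} (hy : 0 < y) :
    HasSum (fun k : ℕ => 1 / (2 * k + 1) * ((1 / (2 * y + 1)) ^ 2) ^ k)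
      ((y + 1 / 2) * log (1 + y⁻¹)) := by
  refine ((hasSum_log_one_add_inv hy).mul_left (y + 1 / 2)).congr_fun fun k => ?_
  have hpow : (1 / (2 * y + 1)) ^ (2 * k + 1) = 1 / (2 * y + 1) * ((1 / (2 * y + 1)) ^ 2) ^ k := by
    ring
  rw [hpow]
  field_simp

lemma one_le_mul_log_one_add_inv {y : ℝ} (hy : 0 < y) :
    1 ≤ (y + 1 / 2) * log (1 + y⁻¹) := by
  refine hasSum_le (fun k => ?_) (hasSum_ite_eq 0 1) (hasSum_mul_log_one_add_inv hy)
  split_ifs with hk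
  · simp [hk]
  · positivity

lemma mul_log_one_add_inv_le {y : ℝ} (hy : 0 < y) :
    (y + 1 / 2) * log (1 + y⁻¹) ≤ 1 + 1 / (12 * y * (y + 1)) := by
  set r := (1 / (2 * y + 1)) ^ 2 with hr
  have hr0 : 0 ≤ r := by positivity
  have hr1 : r < 1 := by
    rw [hr, div_pow, one_pow, div_lt_one (by positivity)]
    nlinarith
  have hgeom : HasSum (fun k : ℕ => r ^ k / 3 + if k = 0 then 2 / 3 else 0)
      ((1 - r)⁻¹ / 3 + 2 / 3) :=
    ((hasSum_geometric_of_lt_one hr0 hr1).div_const 3).add (hasSum_ite_eq 0 _)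
  have hsum : (1 - r)⁻¹ / 3 + 2 / 3 = 1 + 1 / (12 * y * (y + 1)) := by
    have hinv : (1 - r)⁻¹ = (2 * y + 1) ^ 2 / (4 * y * (y + 1)) := by
      rw [hr, inv_eq_iff_eq_inv, inv_div]
      field_simp
      ring
    rw [hinv]
    field_simp
    ring
  rw [← hsum]
  refine hasSum_le (fun k => ?_) (hasSum_mul_log_one_add_inv hy) hgeom
  rcases Nat.eq_zero_or_pos k with rfl | hk
  · norm_num
  · have hcoeff : 1 / (2 * (k : ℝ) + 1) ≤ 1 / 3 := by
      gcongr
      have : (1 : ℝ) ≤ k := by exact_mod_cast hk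
      linarith
    simp only [hk.ne', if_false, add_zero]
    calc 1 / (2 * (k : ℝ) + 1) * r ^ k ≤ 1 / 3 * r ^ k := by gcongr
      _ = r ^ k / 3 := by ring

lemma log_Gamma_add_one {y : ℝ} (hy : 0 < y) :
    log (Gamma (y + 1)) = log (Gamma y) + log y := by
  rw [Gamma_add_one hy.ne', log_mul hy.ne' (Gamma_pos_of_pos hy).ne', add_comm]

/-- Binet's function `μ` shifted by the constant `log (2π) / 2`. -/
noncomputable def binet (y : ℝ) : ℝ :=
  log (Gamma y) - (y - 1 / 2) * log y + y

lemma binet_sub_binet_add_one {y : ℝ} (hy : 0 < y) :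
    binet y - binet (y + 1) = (y + 1 / 2) * log (1 + y⁻¹) - 1 := by
  have hlog : log (1 + y⁻¹) = log (y + 1) - log y := by
    rw [← log_div (by positivity) hy.ne']
    congr 1
    field_simp
  rw [binet, binet, log_Gamma_add_one hy, hlog]
  ring

lemma binet_add_one_le {y : ℝ} (hy : 0 < y) : binet (y + 1) ≤ binet y := by
  linarith [binet_sub_binet_add_one hy, one_le_mul_log_one_add_inv hy]

lemma binet_sub_one_div_le {y : ℝ} (hy : 0 < y) :
    binet y - 1 / (12 * y) ≤ binet (y + 1) - 1 / (12 * (y + 1)) := by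
  have hsplit : 1 / (12 * y * (y + 1)) = 1 / (12 * y) - 1 / (12 * (y + 1)) := by
    field_simp
    ring
  linarith [binet_sub_binet_add_one hy, mul_log_one_add_inv_le hy]

lemma antitone_binet_add_nat {y : ℝ} (hy : 0 < y) : Antitone fun n : ℕ => binet (y + n) :=
  antitone_nat_of_succ_le fun n => by
    simpa only [Nat.cast_succ, ← add_assoc] using binet_add_one_le (by positivity : 0 < y + n)

lemma monotone_binet_add_nat_sub {y : ℝ} (hy : 0 < y) :
    Monotone fun n : ℕ => binet (y + n) - 1 / (12 * (y + n)) :=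
  monotone_nat_of_le_succ fun n => by
    simpa only [Nat.cast_succ, ← add_assoc] using binet_sub_one_div_le (by positivity : 0 < y + n)

lemma binet_nat_add_one (n : ℕ) :
    binet (n + 1) = log (Stirling.stirlingSeq (n + 1)) + log 2 / 2 := by
  rw [binet, Stirling.log_stirlingSeq_formula, Gamma_nat_eq_factorial, Nat.factorial_succ,
    Nat.cast_mul, log_mul (by positivity) (by positivity), log_mul two_ne_zero (by positivity),
    log_div (by positivity) (exp_pos 1).ne', log_exp]
  push_cast
  ring

lemma tendsto_binet_nat_add_one :
    Tendsto (fun n : ℕ => binet (n + 1)) atTop (𝓝 (log (2 * π) / 2)) := by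
  have h := (Stirling.tendsto_stirlingSeq_sqrt_pi.comp (tendsto_add_atTop_nat 1)).log
    (sqrt_pos.2 pi_pos).ne'
  have hlim : log (√π) + log 2 / 2 = log (2 * π) / 2 := by
    rw [log_sqrt pi_pos.le, log_mul two_ne_zero pi_pos.ne']
    ring
  rw [← hlim]
  refine (h.add_const _).congr fun n => ?_
  simp [binet_nat_add_one]

lemma tendsto_add_mul_log_one_add_div (a x : ℝ) :
    Tendsto (fun y => (y + a) * log (1 + x / y)) atTop (𝓝 x) := by
  have hlog : Tendsto (fun y => log (1 + x / y)) atTop (𝓝 0) := by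
    have h := ((tendsto_const_nhds (x := x)).div_atTop tendsto_id).const_add 1
    simpa using (h.log (by norm_num))
  simpa [add_mul] using (tendsto_mul_log_one_add_div_atTop x).add (hlog.const_mul a)

lemma log_Gamma_add_nat_add_one_sub_eq_sub_logGammaSeq {x : ℝ} {n : ℕ} (hx : 0 < x) :
    log (Gamma (x + n + 1)) - log (Gamma (n + 1)) - x * log n
      = log (Gamma x) - BohrMollerup.logGammaSeq x n := by
  have h := BohrMollerup.f_add_nat_eq (f := log ∘ Gamma) (fun hy => log_Gamma_add_one hy) hx (n + 1)
  simp only [Function.comp_apply, Nat.cast_succ, ← add_assoc] at h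
  rw [h, Gamma_nat_eq_factorial, BohrMollerup.logGammaSeq]
  ring

lemma tendsto_binet_add_nat_add_one_sub {x : ℝ} (hx : 0 < x) :
    Tendsto (fun n : ℕ => binet (x + n + 1) - binet (n + 1)) atTop (𝓝 0) := by
  have hGamma : Tendsto (fun n : ℕ => log (Gamma (x + n + 1)) - log (Gamma (n + 1)) - x * log n)
      atTop (𝓝 0) := by
    simpa only [log_Gamma_add_nat_add_one_sub_eq_sub_logGammaSeq hx, sub_self] using
      (tendsto_const_nhds (x := log (Gamma x))).sub (BohrMollerup.tendsto_log_gamma hx)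
  have hlog := (tendsto_add_mul_log_one_add_div (x - 1 / 2) x).comp
    (tendsto_atTop_add_const_right _ 1 tendsto_natCast_atTop_atTop)
  have h := (hGamma.sub (tendsto_log_nat_add_one_sub_log.const_mul x)).sub (hlog.sub_const x)
  simp only [mul_zero, sub_self] at h
  refine h.congr fun n => ?_
  have hdiv : log (1 + x / (n + 1)) = log (x + n + 1) - log (n + 1) := by
    rw [← log_div (by positivity) (by positivity)]
    congr 1
    field_simp
    ring
  simp only [Function.comp_apply, binet, hdiv]
  ring

lemma tendsto_binet_add_nat {x : ℝ} (hx : 0 < x) :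
    Tendsto (fun n : ℕ => binet (x + n)) atTop (𝓝 (log (2 * π) / 2)) := by
  rw [← tendsto_add_atTop_iff_nat 1]
  simpa [Nat.cast_succ, ← add_assoc] using
    tendsto_binet_nat_add_one.add (tendsto_binet_add_nat_add_one_sub hx)

theorem stirling_bounds (x : ℝ) (hx : 1 ≤ x) :
    0 ≤ Real.log (Real.Gamma x) - x * (Real.log x - 1)
        - (1 / 2) * Real.log (2 * Real.pi / x) ∧
      Real.log (Real.Gamma x) - x * (Real.log x - 1)
        - (1 / 2) * Real.log (2 * Real.pi / x) ≤ 1 / (12 * x) := by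
  have hx0 : 0 < x := by linarith
  have hbinet : log (Gamma x) - x * (log x - 1) - 1 / 2 * log (2 * π / x)
      = binet x - log (2 * π) / 2 := by
    rw [log_div (by positivity) hx0.ne', binet]
    ring
  have hlim := tendsto_binet_add_nat hx0
  have hlower := (antitone_binet_add_nat hx0).le_of_tendsto hlim 0
  have hcorr : Tendsto (fun n : ℕ => 1 / (12 * (x + n))) atTop (𝓝 0) :=
    tendsto_const_nhds.div_atTop ((tendsto_atTop_add_const_left _ x
      tendsto_natCast_atTop_atTop).const_mul_atTop (by norm_num))
  have hupper := (monotone_binet_add_nat_sub hx0).ge_of_tendsto (hlim.sub hcorr) 0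
  simp only [Nat.cast_zero, add_zero] at hlower hupper
  rw [hbinet]
  constructor <;> linarith
end

section
/- For all real x ≥ 1, -1/(12x²) ≤ Ψ(x) - log x + 1/(2x) ≤ 0, where Ψ = Γ'/Γ is the digamma function. -/
/-!
Put `E(x) = ψ(x) - log x + 1/(2x)`. The recurrence `ψ(x+1) = ψ(x) + 1/x` gives
`E(x+1) - E(x) = 1/(2x) + 1/(2(x+1)) - (log(x+1) - log x)`, the error of the trapezoidal rule
for `∫ₓ^{x+1} dt/t`, which lies between `0` and `(1/x² - 1/(x+1)²)/12`. Convexity of `log Γ`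
gives `log(x-1) ≤ ψ(x) ≤ log x`, so `E(x+n) → 0`; hence `E(x) ≤ 0`, and `E(x) + 1/(12x²)`,
which decreases along `x, x+1, x+2, …`, stays nonnegative.
-/

open Real Filter Topology Set

local notation "ψ" => deriv fun y => Real.log (Real.Gamma y)

noncomputable def digammaError (x : ℝ) : ℝ :=
  ψ x - log x + 1 / (2 * x)

theorem le_of_hasDerivAt_nonpos_of_tendsto {f f' : ℝ → ℝ} {a l y : ℝ}
    (hf : ∀ x ∈ Ioi a, HasDerivAt f (f' x) x) (hf' : ∀ x ∈ Ioi a, f' x ≤ 0)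
    (hlim : Tendsto f atTop (𝓝 l)) (hy : a < y) : l ≤ f y := by
  have hanti : AntitoneOn f (Ioi a) :=
    antitoneOn_of_hasDerivWithinAt_nonpos (convex_Ioi a)
      (fun x hx => (hf x hx).continuousAt.continuousWithinAt)
      (by simpa only [interior_Ioi] using fun x hx => (hf x hx).hasDerivWithinAt)
      (by simpa only [interior_Ioi] using hf')
  refine le_of_tendsto hlim ?_
  filter_upwards [eventually_ge_atTop y] with x hx
  exact hanti hy (hy.trans_le hx) hx

theorem le_of_le_add_one_of_tendsto {f : ℝ → ℝ} {x l : ℝ}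
    (hf : ∀ y ≥ x, f y ≤ f (y + 1)) (hlim : Tendsto f atTop (𝓝 l)) : f x ≤ l := by
  have hmono : Monotone fun n : ℕ => f (x + n) := monotone_nat_of_le_succ fun n => by
    simpa only [Nat.cast_succ, add_assoc] using hf (x + n) (by simp)
  simpa using hmono.ge_of_tendsto
    (hlim.comp (tendsto_atTop_add_const_left _ x tendsto_natCast_atTop_atTop)) 0

theorem le_of_add_one_le_of_tendsto {f : ℝ → ℝ} {x l : ℝ}
    (hf : ∀ y ≥ x, f (y + 1) ≤ f y) (hlim : Tendsto f atTop (𝓝 l)) : l ≤ f x := by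
  simpa using le_of_le_add_one_of_tendsto (f := fun y => -f y)
    (fun y hy => neg_le_neg (hf y hy)) hlim.neg

theorem tendsto_one_div_mul_add_pow_atTop {c : ℝ} (hc : 0 < c) {k : ℕ} (hk : k ≠ 0)
    (b : ℝ) :
    Tendsto (fun z => 1 / (c * (z + b) ^ k)) atTop (𝓝 0) :=
  tendsto_const_nhds.div_atTop <| ((tendsto_pow_atTop hk).comp
    (tendsto_atTop_add_const_right _ b tendsto_id)).const_mul_atTop hc

theorem hasDerivAt_log_add_one_sub_log {z : ℝ} (hz : 0 < z) :
    HasDerivAt (fun z => log (z + 1) - log z) (-(1 / (z * (z + 1)))) z := by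
  refine ((((hasDerivAt_id' z).add_const 1).log (by positivity)).sub
    (hasDerivAt_log hz.ne')).congr_deriv ?_
  field_simp
  ring

theorem log_add_one_sub_log_le {y : ℝ} (hy : 0 < y) :
    log (y + 1) - log y ≤ 1 / (2 * y) + 1 / (2 * (y + 1)) := by
  have hderiv : ∀ z ∈ Ioi (0 : ℝ), HasDerivAt
      (fun z => 1 / (2 * z) + 1 / (2 * (z + 1)) - (log (z + 1) - log z))
      (-(1 / (2 * z ^ 2 * (z + 1) ^ 2))) z := by
    intro z (hz : 0 < z)
    have h := ((((hasDerivAt_id' z).const_mul 2).inv (by positivity)).add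
      ((((hasDerivAt_id' z).add_const 1).const_mul 2).inv (by positivity))).sub
      (hasDerivAt_log_add_one_sub_log hz)
    simp only [← one_div] at h
    refine h.congr_deriv ?_
    field_simp
    ring
  have hlim : Tendsto (fun z => 1 / (2 * z) + 1 / (2 * (z + 1)) - (log (z + 1) - log z))
      atTop (𝓝 0) := by
    simpa using ((tendsto_one_div_mul_add_pow_atTop two_pos one_ne_zero 0).add
      (tendsto_one_div_mul_add_pow_atTop two_pos one_ne_zero 1)).sub
      (tendsto_log_comp_add_sub_log 1)
  have h := le_of_hasDerivAt_nonpos_of_tendsto hderiv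
    (fun z (hz : 0 < z) => by simp only [neg_nonpos]; positivity) hlim hy
  linarith

theorem le_log_add_one_sub_log {y : ℝ} (hy : 0 < y) :
    1 / (2 * y) + 1 / (2 * (y + 1)) - (1 / (12 * y ^ 2) - 1 / (12 * (y + 1) ^ 2))
      ≤ log (y + 1) - log y := by
  have hderiv : ∀ z ∈ Ioi (0 : ℝ), HasDerivAt
      (fun z => log (z + 1) - log z - (1 / (2 * z) + 1 / (2 * (z + 1)))
        + (1 / (12 * z ^ 2) - 1 / (12 * (z + 1) ^ 2)))
      (-(1 / (6 * z ^ 3 * (z + 1) ^ 3))) z := by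
    intro z (hz : 0 < z)
    have h := ((hasDerivAt_log_add_one_sub_log hz).sub
      ((((hasDerivAt_id' z).const_mul 2).inv (by positivity)).add
        ((((hasDerivAt_id' z).add_const 1).const_mul 2).inv (by positivity)))).add
      ((((hasDerivAt_pow 2 z).const_mul 12).inv (by positivity)).sub
        ((((hasDerivAt_pow 2 (z + 1)).const_mul 12).inv (by positivity)).comp_add_const z 1))
    simp only [← one_div] at h
    refine h.congr_deriv ?_
    field_simp
    ring
  have hlim : Tendsto (fun z => log (z + 1) - log z - (1 / (2 * z) + 1 / (2 * (z + 1)))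
      + (1 / (12 * z ^ 2) - 1 / (12 * (z + 1) ^ 2))) atTop (𝓝 0) := by
    have h12 : (0 : ℝ) < 12 := by norm_num
    simpa using ((tendsto_log_comp_add_sub_log 1).sub
      ((tendsto_one_div_mul_add_pow_atTop two_pos one_ne_zero 0).add
        (tendsto_one_div_mul_add_pow_atTop two_pos one_ne_zero 1))).add
      ((tendsto_one_div_mul_add_pow_atTop h12 two_ne_zero 0).sub
        (tendsto_one_div_mul_add_pow_atTop h12 two_ne_zero 1))
  have h := le_of_hasDerivAt_nonpos_of_tendsto hderiv
    (fun z (hz : 0 < z) => by simp only [neg_nonpos]; positivity) hlim hy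
  linarith

theorem differentiableAt_logGamma {x : ℝ} (hx : 0 < x) :
    DifferentiableAt ℝ (fun y => log (Gamma y)) x := by
  have hne : ∀ m : ℕ, x ≠ -m := fun m => (neg_nonpos.mpr m.cast_nonneg).trans_lt hx |>.ne'
  exact (differentiableAt_Gamma hne).log (Gamma_ne_zero hne)

theorem logGamma_add_one {x : ℝ} (hx : 0 < x) :
    log (Gamma (x + 1)) = log (Gamma x) + log x := by
  rw [Gamma_add_one hx.ne', log_mul hx.ne' (Gamma_pos_of_pos hx).ne', add_comm]

theorem deriv_logGamma_add_one {x : ℝ} (hx : 0 < x) : ψ (x + 1) = ψ x + 1 / x := by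
  rw [← deriv_comp_add_const, one_div, ← deriv_log,
    ← deriv_add (differentiableAt_logGamma hx) (differentiableAt_log hx.ne')]
  refine Filter.EventuallyEq.deriv_eq ?_
  filter_upwards [eventually_gt_nhds hx] with y hy
  exact logGamma_add_one hy

theorem deriv_logGamma_le_log {x : ℝ} (hx : 0 < x) : ψ x ≤ log x := by
  have h := convexOn_log_Gamma.deriv_le_slope (mem_Ioi.mpr hx)
    (mem_Ioi.mpr (by linarith : (0 : ℝ) < x + 1)) (by linarith) (differentiableAt_logGamma hx)
  simpa [slope_def_field, Function.comp_def, logGamma_add_one hx] using h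

theorem log_le_deriv_logGamma_add_one {x : ℝ} (hx : 0 < x) : log x ≤ ψ (x + 1) := by
  have h := convexOn_log_Gamma.slope_le_deriv (mem_Ioi.mpr hx)
    (mem_Ioi.mpr (by linarith : (0 : ℝ) < x + 1)) (by linarith)
    (differentiableAt_logGamma (by linarith))
  simpa [slope_def_field, Function.comp_def, logGamma_add_one hx] using h

theorem tendsto_deriv_logGamma_sub_log : Tendsto (fun x => ψ x - log x) atTop (𝓝 0) := by
  refine tendsto_of_tendsto_of_tendsto_of_le_of_le' (tendsto_log_comp_add_sub_log (-1))
    tendsto_const_nhds ?_ ?_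
  · filter_upwards [eventually_gt_atTop 1] with x hx
    have h := log_le_deriv_logGamma_add_one (x := x - 1) (by linarith)
    rw [sub_add_cancel] at h
    rw [← sub_eq_add_neg]
    linarith
  · filter_upwards [eventually_gt_atTop 0] with x hx
    linarith [deriv_logGamma_le_log hx]

theorem tendsto_digammaError : Tendsto digammaError atTop (𝓝 0) := by
  show Tendsto (fun x => ψ x - log x + 1 / (2 * x)) atTop (𝓝 0)
  simpa using tendsto_deriv_logGamma_sub_log.add
    (tendsto_one_div_mul_add_pow_atTop two_pos one_ne_zero 0)

theorem digammaError_add_one {x : ℝ} (hx : 0 < x) :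
    digammaError (x + 1)
      = digammaError x + (1 / (2 * x) + 1 / (2 * (x + 1)) - (log (x + 1) - log x)) := by
  rw [digammaError, digammaError, deriv_logGamma_add_one hx]
  field_simp
  ring

theorem digamma_bounds (x : ℝ) (hx : 1 ≤ x) :
    -(1 / (12 * x ^ 2)) ≤ deriv (fun y => Real.log (Real.Gamma y)) x
        - Real.log x + 1 / (2 * x) ∧
      deriv (fun y => Real.log (Real.Gamma y)) x - Real.log x + 1 / (2 * x) ≤ 0 := by
  have hpos : ∀ y ≥ x, 0 < y := fun y hy => by linarith
  have hlower : 0 ≤ digammaError x + 1 / (12 * x ^ 2) := by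
    refine le_of_add_one_le_of_tendsto (f := fun y => digammaError y + 1 / (12 * y ^ 2))
      (fun y hy => ?_) ?_
    · rw [digammaError_add_one (hpos y hy)]
      linarith [le_log_add_one_sub_log (hpos y hy)]
    · simpa using tendsto_digammaError.add
        (tendsto_one_div_mul_add_pow_atTop (by norm_num : (0 : ℝ) < 12) two_ne_zero 0)
  have hupper : digammaError x ≤ 0 := by
    refine le_of_le_add_one_of_tendsto (fun y hy => ?_) tendsto_digammaError
    rw [digammaError_add_one (hpos y hy)]
    linarith [log_add_one_sub_log_le (hpos y hy)]
  exact ⟨by unfold digammaError at hlower; linarith, hupper⟩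
end

section
/- If A, B, C are positive integers with A!·B! = C! and A ≤ B ≤ C - 2, then R(A,B) ≤ 0, where R(A,B) = log Γ(A+B+2 - log(A+1)/log 2 - log(B+1)/log 2) - log Γ(A+1) - log Γ(B+1). -/
/-!
Write `s(n)` for the binary digit sum of `n`. Legendre's formula `v₂(n!) = n - s(n)` turns
`A! B! = C!` into `A + B - s(A) - s(B) = C - s(C) ≤ C - 1`. Since `2 ^ s(n) ≤ n + 1`, we have
`s(n) ≤ log₂(n + 1)`, so the argument `x` of `Γ` satisfies `x ≤ A + B + 2 - s(A) - s(B) ≤ C + 1`,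
and `log₂(n + 1) ≤ n` gives `2 ≤ x`. As `Γ` is increasing on `[2, ∞)`,
`Γ(x) ≤ Γ(C + 1) = C! = A! B! = Γ(A + 1) Γ(B + 1)`.
-/

open Real
open scoped Nat

namespace Nat

theorem two_pow_digits_two_sum_le (n : ℕ) : 2 ^ (digits 2 n).sum ≤ n + 1 := by
  induction n using Nat.strong_induction_on with
  | _ n ih =>
    rcases Nat.eq_zero_or_pos n with rfl | hn
    · simp
    rw [digits_def' one_lt_two hn, List.sum_cons, pow_add]
    have hhalf := Nat.mul_le_mul_left (2 ^ (n % 2)) (ih (n / 2) (div_lt_self hn one_lt_two))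
    rcases mod_two_eq_zero_or_one n with hmod | hmod <;> rw [hmod] at hhalf ⊢ <;> omega

theorem digits_sum_pos_s9 {b n : ℕ} (hn : n ≠ 0) : 0 < (digits b n).sum :=
  (pos_of_ne_zero (getLast_digit_ne_zero b hn)).trans_le
    (List.le_sum_of_mem (List.getLast_mem _))

theorem add_digits_two_sum_eq_of_factorial_mul_factorial {A B C : ℕ} (h : A ! * B ! = C !) :
    A + B + (digits 2 C).sum = C + (digits 2 A).sum + (digits 2 B).sum := by
  have : Fact (Nat.Prime 2) := ⟨prime_two⟩
  have hval : padicValNat 2 A ! + padicValNat 2 B ! = padicValNat 2 C ! := by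
    rw [← padicValNat.mul (factorial_ne_zero A) (factorial_ne_zero B), h]
  have legendre (n : ℕ) : padicValNat 2 n ! = n - (digits 2 n).sum := by
    simpa using sub_one_mul_padicValNat_factorial (p := 2) n
  rw [legendre, legendre, legendre] at hval
  have := digit_sum_le 2 A
  have := digit_sum_le 2 B
  have := digit_sum_le 2 C
  omega

end Nat

theorem Real.digits_two_sum_le_logb (n : ℕ) : ((Nat.digits 2 n).sum : ℝ) ≤ logb 2 (n + 1) := by
  rw [le_logb_iff_rpow_le one_lt_two (by positivity), rpow_natCast]
  exact_mod_cast Nat.two_pow_digits_two_sum_le n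

theorem Real.logb_two_add_one_le (n : ℕ) : logb 2 (n + 1) ≤ n := by
  rw [logb_le_iff_le_rpow one_lt_two (by positivity), rpow_natCast]
  exact_mod_cast Nat.lt_two_pow_self

theorem Real.log_Gamma_le_log_Gamma_of_two_le {x y : ℝ} (hx : 2 ≤ x) (hxy : x ≤ y) :
    log (Gamma x) ≤ log (Gamma y) :=
  log_le_log (Gamma_pos_of_pos (by linarith))
    (Gamma_strictMonoOn_Ici.monotoneOn hx (hx.trans hxy) hxy)

theorem R_nonpos_general (A B C : ℕ) (hC : 2 ≤ C)
    (h : Nat.factorial A * Nat.factorial B = Nat.factorial C) :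
    Real.log (Real.Gamma ((A : ℝ) + B + 2 - Real.log (A + 1) / Real.log 2
        - Real.log (B + 1) / Real.log 2))
      - Real.log (Real.Gamma ((A : ℝ) + 1)) - Real.log (Real.Gamma ((B : ℝ) + 1)) ≤ 0 := by
  simp only [log_div_log]
  have hdigits : (A + B + (Nat.digits 2 C).sum : ℝ) = C + (Nat.digits 2 A).sum
      + (Nat.digits 2 B).sum := by
    exact_mod_cast Nat.add_digits_two_sum_eq_of_factorial_mul_factorial h
  have hsC : (1 : ℝ) ≤ (Nat.digits 2 C).sum := by
    exact_mod_cast Nat.digits_sum_pos_s9 (by omega : C ≠ 0)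
  have hGamma := log_Gamma_le_log_Gamma_of_two_le (x := A + B + 2 - logb 2 (A + 1) - logb 2 (B + 1))
    (y := C + 1)
    (by linarith [logb_two_add_one_le A, logb_two_add_one_le B])
    (by linarith [digits_two_sum_le_logb A, digits_two_sum_le_logb B])
  have hfactorial : log (A ! : ℝ) + log (B ! : ℝ) = log (C ! : ℝ) := by
    rw [← log_mul (by positivity) (by positivity)]
    exact_mod_cast congrArg (fun n : ℕ => log n) h
  simp only [Gamma_nat_eq_factorial] at hGamma ⊢
  linarith

theorem R_nonpos (A B C : ℕ) (hA : 0 < A) (hAB : A ≤ B) (hBC : B ≤ C - 2) (hC : 2 ≤ C)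
    (h : Nat.factorial A * Nat.factorial B = Nat.factorial C) :
    Real.log (Real.Gamma ((A : ℝ) + B + 2 - Real.log (A + 1) / Real.log 2
        - Real.log (B + 1) / Real.log 2))
      - Real.log (Real.Gamma ((A : ℝ) + 1)) - Real.log (Real.Gamma ((B : ℝ) + 1)) ≤ 0 :=
  R_nonpos_general A B C hC h
end

section
/- Suppose (A,B,C) ≠ (6,7,10) is a triple of positive integers with A!·B! = C!, A ≤ B ≤ C - 2, and B ≥ 10^6. Then B - A > C - log(C+1)/log 2 - 3·log log(C+1)/log 2 - 3.9411. -/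
/-!
Write `C = B + k`, `a = A + 1`, `b = log (B + 1)` and `s n` for the binary digit sum of `n`.
From `(B + 1) ^ k ≤ A!` and `log A! ≤ ∫₁ᵃ log = a log a - A` we get `k b ≤ a (log a - 1) + 1`;
Legendre's formula for the `2`-adic valuation of `A! B! = C!` gives `A + 1 ≤ k + s A + s B`,
hence `a log 2 ≤ k log 2 + log a + b` since `2 ^ s n ≤ n + 1`. Eliminating `k` between these two
inequalities bounds `a` in terms of `b`; bootstrapping (`a ≤ 2.9 b²`, `a ≤ 3.5 b`, `a ≤ 2.35 b`)
yields `log a ≤ log b + 0.8545`. Eliminating `a` instead bounds `k`, and together these give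
`2 k log 2 + log a < 3 log b + 4.9411 log 2`. Finally `B - A = C - (A + k)` and
`A + k ≤ 2 k - 1 + s A + s B ≤ 2 k - 1 + log₂ a + log₂ (C + 1)`.
-/

open Real
open scoped Nat

theorem two_pow_digits_sum_le (n : ℕ) : 2 ^ (Nat.digits 2 n).sum ≤ n + 1 := by
  induction n using Nat.strong_induction_on with
  | _ n ih =>
    rcases Nat.eq_zero_or_pos n with rfl | hn
    · simp
    · rw [Nat.digits_def' (by norm_num) hn, List.sum_cons, pow_add]
      have := ih (n / 2) (Nat.div_lt_self hn (by norm_num))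
      rcases Nat.mod_two_eq_zero_or_one n with h | h <;> rw [h] <;> omega

theorem digits_sum_mul_log_two_le (n : ℕ) : (Nat.digits 2 n).sum * log 2 ≤ log (n + 1) := by
  rw [← log_pow]
  exact log_le_log (by positivity) (by exact_mod_cast two_pow_digits_sum_le n)

theorem add_add_one_le_add_digits_sum {A B C : ℕ} (h : A ! * B ! = C !) (hC : C ≠ 0) :
    A + B + 1 ≤ C + (Nat.digits 2 A).sum + (Nat.digits 2 B).sum := by
  have := Fact.mk Nat.prime_two
  have hv := congrArg (padicValNat 2) h
  rw [padicValNat.mul (Nat.factorial_ne_zero A) (Nat.factorial_ne_zero B)] at hv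
  have hA := sub_one_mul_padicValNat_factorial (p := 2) A
  have hB := sub_one_mul_padicValNat_factorial (p := 2) B
  have hC' := sub_one_mul_padicValNat_factorial_lt_of_ne_zero 2 hC
  have := Nat.digit_sum_le 2 A
  have := Nat.digit_sum_le 2 B
  simp only [Nat.add_one_sub_one, one_mul] at hA hB hC'
  omega

theorem pow_le_factorial_of_factorial_mul_factorial_eq {A B k : ℕ} (h : A ! * B ! = (B + k)!) :
    (B + 1) ^ k ≤ A ! := by
  have := (Nat.factorial_mul_pow_le_factorial (m := B) (n := k)).trans_eq h.symm
  rw [mul_comm B !] at this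
  exact Nat.le_of_mul_le_mul_right this (Nat.factorial_pos B)

theorem log_factorial_le (n : ℕ) : log (n ! : ℝ) ≤ (n + 1) * log (n + 1) - n := by
  have hsum : log (n ! : ℝ) = ∑ i ∈ Finset.Ico 1 (n + 1), log (i : ℝ) := by
    rw [← Finset.prod_Ico_id_eq_factorial, Nat.cast_prod, log_prod]
    intro i hi
    simp only [Finset.mem_Ico] at hi
    exact_mod_cast (by omega : i ≠ 0)
  have hmono : MonotoneOn log (Set.Icc ((1 : ℕ) : ℝ) ((n + 1 : ℕ) : ℝ)) :=
    strictMonoOn_log.monotoneOn.mono fun x hx => by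
      simp only [Set.mem_Icc, Nat.cast_one] at hx; exact lt_of_lt_of_le one_pos hx.1
  rw [hsum]
  refine (hmono.sum_le_integral_Ico (by omega)).trans_eq ?_
  rw [integral_log]
  push_cast
  rw [log_one]
  ring

theorem log_le_of_le_sum_range {x c : ℝ} (hx : 0 < x) (hc : 0 ≤ c) (n : ℕ)
    (h : x ≤ ∑ i ∈ Finset.range n, c ^ i / (i ! : ℝ)) : log x ≤ c :=
  (log_le_iff_le_exp hx).2 (h.trans (Real.sum_le_exp_of_nonneg hc n))

theorem exists_log_le_add_and_quadratic_le {b₀ b c : ℝ} (hb₀ : 0 < b₀) (hb : b₀ ≤ b)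
    (hc : log b₀ ≤ c) : ∃ v, 0 ≤ v ∧ log b ≤ c + v ∧ b₀ * (1 + v + v ^ 2 / 2) ≤ b := by
  have hv : 0 ≤ log b - log b₀ := sub_nonneg.2 (log_le_log hb₀ hb)
  refine ⟨log b - log b₀, hv, by linarith, ?_⟩
  calc b₀ * (1 + (log b - log b₀) + (log b - log b₀) ^ 2 / 2)
      ≤ b₀ * exp (log b - log b₀) := by gcongr; exact quadratic_le_exp_of_nonneg hv
    _ = b := by rw [exp_sub, exp_log (hb₀.trans_le hb), exp_log hb₀]; field_simp

theorem le_of_mul_mul_sub_add_one_le {a b t T M L : ℝ} (hL : 0 < L) (ha : 0 < a) (hb : 0 ≤ b)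
    (htT : t ≤ T) (hTb : T < b + 1) (h : a * L * (b - t + 1) ≤ b * (t + b) + L)
    (hM : b * (T + b) + L ≤ M * L * (b - T + 1)) : a ≤ M := by
  refine le_of_mul_le_mul_right ?_ (mul_pos hL (by linarith : 0 < b - T + 1))
  nlinarith [mul_le_mul_of_nonneg_left (sub_nonneg.2 htT) (mul_pos ha hL).le,
    mul_le_mul_of_nonneg_left htT hb]

theorem two_mul_mul_add_lt_of_mul_mul_sub_add_one_le {k b t T L S : ℝ} (hL : 0 < L) (ht : 1 ≤ t)
    (htT : t ≤ T) (hTb : T < b + 1) (h : k * L * (b - t + 1) ≤ (t + b) * (t - 1) + L)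
    (hS : 2 * ((2 * T - 1) * (T - 1) + L) < (S - 3 * T + 2) * (b - T + 1)) :
    2 * k * L + t < S := by
  have hD : 0 < b - t + 1 := by linarith
  have hS₀ : 0 < S - 3 * T + 2 := by
    by_contra! hS₀
    nlinarith [mul_nonneg (sub_nonneg.2 hS₀) (by linarith : (0 : ℝ) ≤ b - T + 1)]
  refine lt_of_mul_lt_mul_right ?_ hD.le
  nlinarith [mul_le_mul_of_nonneg_left htT hL.le,
    mul_le_mul (by linarith : 2 * t - 1 ≤ 2 * T - 1) (by linarith : t - 1 ≤ T - 1)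
      (by linarith) (by linarith),
    mul_le_mul_of_nonneg_left (by linarith : b - T + 1 ≤ b - t + 1) hS₀.le,
    mul_le_mul_of_nonneg_left (by linarith : 0 ≤ T - t) hD.le]

theorem two_mul_mul_log_two_add_log_lt {a k b : ℝ} (ha : 0 < a) (ht : 1 ≤ log a)
    (hab : log a ≤ b) (hb : 13.8 ≤ b) (hk : k * b ≤ a * (log a - 1) + 1)
    (hak : a * log 2 ≤ k * log 2 + log a + b) :
    2 * k * log 2 + log a < 3 * log b + 4.9411 * log 2 := by
  have hL₀ := log_two_gt_d9
  have hL₁ := log_two_lt_d9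
  have hL : 0 < log 2 := by linarith
  have hb₀ : 0 < b := by linarith
  set t := log a
  set L := log 2
  have elim_k : a * L * (b - t + 1) ≤ b * (t + b) + L := by
    nlinarith [mul_le_mul_of_nonneg_left hak hb₀.le, mul_le_mul_of_nonneg_left hk hL.le]
  have elim_a : k * L * (b - t + 1) ≤ (t + b) * (t - 1) + L := by
    nlinarith [mul_le_mul_of_nonneg_left hak (by linarith : (0 : ℝ) ≤ t - 1),
      mul_le_mul_of_nonneg_left hk hL.le]
  -- With `b = 13.8 eᵛ`, each polynomial condition in `b` and `log b` below becomes one in `v ≥ 0`.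
  obtain ⟨v, hv, hu, hbv⟩ := exists_log_le_add_and_quadratic_le (by norm_num) hb
    (log_le_of_le_sum_range (c := 2.6247) (by norm_num) (by norm_num) 16
      (by norm_num [Finset.sum_range_succ, Nat.factorial]))
  have round₀ : t ≤ 2 * log b + 1.0648 := by
    have := log_le_log ha <| le_of_mul_mul_sub_add_one_le (M := 2.9 * b ^ 2) hL ha hb₀.le hab
      (by linarith) elim_k (by nlinarith)
    rw [log_mul (by norm_num) (by positivity), log_pow] at this
    linarith [log_le_of_le_sum_range (c := 1.0648) (x := 2.9) (by norm_num) (by norm_num) 10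
      (by norm_num [Finset.sum_range_succ, Nat.factorial])]
  have round₁ : t ≤ log b + 1.2528 := by
    have hlin : 0.06 + (2 * log b + 1.0648 + b)
        ≤ 3.5 * 0.6931471803 * (b - (2 * log b + 1.0648) + 1) := by nlinarith
    have hpos : 0 ≤ b * (b - (2 * log b + 1.0648) + 1) := by nlinarith
    have := log_le_log ha <| le_of_mul_mul_sub_add_one_le (M := 3.5 * b) hL ha hb₀.le round₀
      (by nlinarith) elim_k
      (by nlinarith [mul_le_mul_of_nonneg_left hlin hb₀.le,
        mul_le_mul_of_nonneg_right hL₀.le hpos])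
    rw [log_mul (by norm_num) (by positivity)] at this
    linarith [log_le_of_le_sum_range (c := 1.2528) (x := 3.5) (by norm_num) (by norm_num) 10
      (by norm_num [Finset.sum_range_succ, Nat.factorial])]
  have round₂ : t ≤ log b + 0.8545 := by
    have hlin : 0.06 + (log b + 1.2528 + b)
        ≤ 2.35 * 0.6931471803 * (b - (log b + 1.2528) + 1) := by nlinarith
    have hpos : 0 ≤ b * (b - (log b + 1.2528) + 1) := by nlinarith
    have := log_le_log ha <| le_of_mul_mul_sub_add_one_le (M := 2.35 * b) hL ha hb₀.le round₁
      (by nlinarith) elim_k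
      (by nlinarith [mul_le_mul_of_nonneg_left hlin hb₀.le,
        mul_le_mul_of_nonneg_right hL₀.le hpos])
    rw [log_mul (by norm_num) (by positivity)] at this
    linarith [log_le_of_le_sum_range (c := 0.8545) (x := 2.35) (by norm_num) (by norm_num) 9
      (by norm_num [Finset.sum_range_succ, Nat.factorial])]
  exact two_mul_mul_add_lt_of_mul_mul_sub_add_one_le hL ht round₂ (by nlinarith) elim_a
    (by nlinarith)

theorem le_log_one_million : (13.8 : ℝ) ≤ log 1000000 := by
  have := log_le_log (by positivity) (by norm_num : (2 : ℝ) ^ 239 ≤ 1000000 ^ 12)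
  rw [log_pow, log_pow] at this
  push_cast at this
  linarith [log_two_gt_d9]

theorem add_one_mul_log_two_le_of_factorial_mul_factorial_eq {A B k : ℕ}
    (h : A ! * B ! = (B + k)!) (hC : B + k ≠ 0) :
    (A + 1) * log 2 ≤ k * log 2 + log (A + 1) + log (B + 1) := by
  have hdig : (A : ℝ) + 1 ≤ k + (Nat.digits 2 A).sum + (Nat.digits 2 B).sum := by
    have := add_add_one_le_add_digits_sum h hC
    exact_mod_cast (by omega : A + 1 ≤ k + (Nat.digits 2 A).sum + (Nat.digits 2 B).sum)
  nlinarith [mul_le_mul_of_nonneg_right hdig (log_pos one_lt_two).le,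
    digits_sum_mul_log_two_le A, digits_sum_mul_log_two_le B]

theorem two_mul_mul_log_two_add_log_lt_of_factorial_mul_factorial_eq {A B k : ℕ}
    (h : A ! * B ! = (B + k)!) (hAB : A ≤ B) (hB : 10 ^ 6 ≤ B) (hk : 0 < k) :
    2 * k * log 2 + log (A + 1) < 3 * log (log (B + 1)) + 4.9411 * log 2 := by
  have hpow := pow_le_factorial_of_factorial_mul_factorial_eq h
  have hA : 2 ≤ A := by
    by_contra! hA
    have : A ! = 1 := Nat.factorial_eq_one.2 (by omega)
    have := (Nat.le_self_pow hk.ne' (B + 1)).trans hpow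
    omega
  refine two_mul_mul_log_two_add_log_lt (by positivity) ?_ ?_ ?_ ?_
    (add_one_mul_log_two_le_of_factorial_mul_factorial_eq h (by omega))
  · rw [le_log_iff_exp_le (by positivity)]
    have : (3 : ℝ) ≤ A + 1 := by exact_mod_cast (by omega : 3 ≤ A + 1)
    linarith [exp_one_lt_d9]
  · exact log_le_log (by positivity) (by exact_mod_cast (by omega : A + 1 ≤ B + 1))
  · exact le_log_one_million.trans (log_le_log (by positivity) (by exact_mod_cast (by omega)))
  · have := log_le_log (by positivity) (by exact_mod_cast hpow : (((B + 1) ^ k : ℕ) : ℝ) ≤ A !)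
    push_cast at this
    rw [log_pow] at this
    linarith [log_factorial_le A]

theorem bound_B_sub_A_general (A B C : ℕ) (hAB : A ≤ B) (hBC : B ≤ C - 2)
    (h : Nat.factorial A * Nat.factorial B = Nat.factorial C)
    (hB : 10 ^ 6 ≤ B) :
    (B : ℝ) - A > (C : ℝ) - Real.log (C + 1) / Real.log 2
      - 3 * Real.log (Real.log (C + 1)) / Real.log 2 - 3.9411 := by
  obtain ⟨k, rfl⟩ : ∃ k, C = B + k := ⟨C - B, by omega⟩
  have hL : 0 < log 2 := log_pos one_lt_two
  have hmain := two_mul_mul_log_two_add_log_lt_of_factorial_mul_factorial_eq h hAB hB (by omega)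
  have hdig := add_one_mul_log_two_le_of_factorial_mul_factorial_eq h (by omega)
  have hb : log (B + 1) ≤ log (B + k + 1) :=
    log_le_log (by positivity) (by linarith [(Nat.cast_nonneg k : (0 : ℝ) ≤ k)])
  have hlogb : log (log (B + 1)) ≤ log (log (B + k + 1)) :=
    log_le_log (log_pos (by norm_cast; omega)) hb
  have key : (A + k : ℝ) * log 2
      < log (B + k + 1) + 3 * log (log (B + k + 1)) + 3.9411 * log 2 := by linarith
  rw [← lt_div_iff₀ hL, add_div, add_div, mul_div_cancel_right₀ _ hL.ne'] at key
  push_cast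
  linarith

theorem bound_B_sub_A (A B C : ℕ) (hA : 0 < A) (hAB : A ≤ B) (hBC : B ≤ C - 2) (hC : 2 ≤ C)
    (h : Nat.factorial A * Nat.factorial B = Nat.factorial C)
    (hne : (A, B, C) ≠ (6, 7, 10)) (hB : 10 ^ 6 ≤ B) :
    (B : ℝ) - A > (C : ℝ) - Real.log (C + 1) / Real.log 2
      - 3 * Real.log (Real.log (C + 1)) / Real.log 2 - 3.9411 :=
  bound_B_sub_A_general A B C hAB hBC h hB
end

section
/- For integers 2 ≤ k ≤ 12, if A, B are positive integers satisfying A! = ∏_{i=1}^k (B+i), then B = ⌈(A!)^{1/k} - (k+1)/2⌉. -/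
set_option maxHeartbeats 1600000 in
theorem B_eq_ceil (k A B : ℕ) (hk2 : 2 ≤ k) (hk12 : k ≤ 12) (hA : 0 < A) (hB : 0 < B)
    (h : (Nat.factorial A : ℝ) = ∏ i ∈ Finset.Icc 1 k, ((B : ℝ) + i)) :
    (B : ℤ) = ⌈(Nat.factorial A : ℝ) ^ ((1 : ℝ) / k) - ((k : ℝ) + 1) / 2⌉ := by
  have hb : (1:ℝ) ≤ (B:ℝ) := by exact_mod_cast hB
  have h0 : (0:ℝ) ≤ (B:ℝ) - 1 := by linarith
  have key : ((B:ℝ) + ((k:ℝ)-1)/2)^k < (Nat.factorial A : ℝ) ∧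
      (Nat.factorial A : ℝ) < ((B:ℝ) + ((k:ℝ)+1)/2)^k := by
    rw [h]
    interval_cases k <;>
    · norm_num [Finset.prod_Icc_succ_top, Finset.Icc_self]
      constructor <;>
        linarith [pow_nonneg h0 2, pow_nonneg h0 3, pow_nonneg h0 4, pow_nonneg h0 5,
          pow_nonneg h0 6, pow_nonneg h0 7, pow_nonneg h0 8, pow_nonneg h0 9,
          pow_nonneg h0 10, pow_nonneg h0 11, mul_self_nonneg ((B:ℝ)-1)]
  obtain ⟨hlow, hup⟩ := key
  set x := (Nat.factorial A : ℝ) ^ ((1 : ℝ) / k) with hxdef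
  have hk0 : k ≠ 0 := by omega
  have hfac : (0:ℝ) ≤ (Nat.factorial A : ℝ) := by positivity
  have hxk : x ^ k = (Nat.factorial A : ℝ) := by
    rw [hxdef, one_div, ← Real.rpow_natCast ((Nat.factorial A : ℝ) ^ ((k:ℝ)⁻¹ : ℝ)) k,
      ← Real.rpow_mul hfac, inv_mul_cancel₀ (by exact_mod_cast hk0), Real.rpow_one]
  have hx0 : 0 ≤ x := Real.rpow_nonneg hfac _
  have hkr : (1:ℝ) ≤ (k:ℝ) := by exact_mod_cast Nat.one_le_iff_ne_zero.2 hk0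
  have h1 : (B:ℝ) + ((k:ℝ)-1)/2 < x := by
    apply lt_of_pow_lt_pow_left₀ k hx0
    rw [hxk]; exact hlow
  have h2 : x < (B:ℝ) + ((k:ℝ)+1)/2 := by
    apply lt_of_pow_lt_pow_left₀ k (by linarith)
    rw [hxk]; exact hup
  symm
  rw [Int.ceil_eq_iff]
  push_cast
  constructor <;> linarith
end
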